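/- arXiv:2111.08796 — 5 statements merged into one kernel-verified Lean document; each statement's English description precedes it below -/
import Mathlib

section
/- The sequence v_n defined by v_0 = 1, v_1 = 5 and the recurrence (n+1)^3 v_{n+1} - (2n+1)(17n^2+17n+5) v_n + n^3 v_{n-1} = 0 for n ≥ 1 consists entirely of integers. -/
open Finset

/-- The Apéry numbers. -/
def aperyA (n : ℕ) : ℤ :=
  ∑ k ∈ range (n + 1), (n.choose k : ℤ) ^ 2 * ((n + k).choose k : ℤ) ^ 2

/-- Summand of the Apéry numbers, as a rational. -/
def cc (n k : ℕ) : ℚ := (n.choose k : ℚ) ^ 2 * ((n + k).choose k : ℚ) ^ 2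

/-- Zeilberger certificate for Apéry's recurrence. -/
def Bc (m k : ℕ) : ℚ :=
  4 * (2 * (m : ℚ) + 3) * ((k : ℚ) * (2 * k + 1) - (2 * (m : ℚ) + 3) ^ 2) * cc (m + 1) k

def hc (m : ℕ) : ℕ → ℚ
  | 0 => 0
  | (k + 1) => Bc m k

lemma cc_zero_of_lt {n k : ℕ} (h : n < k) : cc n k = 0 := by
  simp [cc, Nat.choose_eq_zero_of_lt h]

set_option maxHeartbeats 1000000 in
lemma key_mid (m j : ℕ) (hj : j ≤ m) :
    ((m : ℚ) + 2) ^ 3 * cc (m + 2) (j + 1)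
      - (2 * (m : ℚ) + 3) * (17 * (m : ℚ) ^ 2 + 51 * m + 39) * cc (m + 1) (j + 1)
      + ((m : ℚ) + 1) ^ 3 * cc m (j + 1) = Bc m (j + 1) - Bc m j := by
  have N1 := Nat.choose_mul_succ_eq (m + 1) (j + 1)
  have N2 := Nat.choose_mul_succ_eq m (j + 1)
  have N3 := Nat.choose_mul_succ_eq (m + 1 + (j + 1)) (j + 1)
  have N4 := Nat.choose_mul_succ_eq (m + (j + 1)) (j + 1)
  have N5 := Nat.choose_succ_right_eq (m + 1) j
  have N6 := Nat.add_one_mul_choose_eq (m + 1 + j) j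
  rw [show m + 1 + 1 - (j + 1) = m + 1 - j from by omega] at N1
  rw [show m + 1 - (j + 1) = m - j from by omega] at N2
  rw [show m + 1 + (j + 1) + 1 - (j + 1) = m + 2 from by omega,
      show m + 1 + (j + 1) + 1 = m + 2 + (j + 1) from by omega] at N3
  rw [show m + (j + 1) + 1 - (j + 1) = m + 1 from by omega,
      show m + (j + 1) + 1 = m + 1 + (j + 1) from by omega] at N4
  rw [show m + 1 + j + 1 = m + 1 + (j + 1) from by omega] at N6
  have q1 := congrArg (Nat.cast : ℕ → ℚ) N1
  have q2 := congrArg (Nat.cast : ℕ → ℚ) N2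
  have q3 := congrArg (Nat.cast : ℕ → ℚ) N3
  have q4 := congrArg (Nat.cast : ℕ → ℚ) N4
  have q5 := congrArg (Nat.cast : ℕ → ℚ) N5
  have q6 := congrArg (Nat.cast : ℕ → ℚ) N6
  push_cast [Nat.cast_sub (by omega : j ≤ m + 1)] at q1 q5
  push_cast [Nat.cast_sub hj] at q2
  push_cast at q3 q4 q6
  simp only [cc, Bc]
  set A2 : ℚ := ((m + 2).choose (j + 1) : ℚ)
  set A1 : ℚ := ((m + 1).choose (j + 1) : ℚ)
  set A0 : ℚ := ((m).choose (j + 1) : ℚ)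
  set B2 : ℚ := ((m + 2 + (j + 1)).choose (j + 1) : ℚ)
  set B1 : ℚ := ((m + 1 + (j + 1)).choose (j + 1) : ℚ)
  set B0 : ℚ := ((m + (j + 1)).choose (j + 1) : ℚ)
  set A1' : ℚ := ((m + 1).choose j : ℚ)
  set B1' : ℚ := ((m + 1 + j).choose j : ℚ)
  have d1 : ((m : ℚ) + 1 - j) ≠ 0 := by
    have : (j : ℚ) ≤ m := by exact_mod_cast hj
    linarith
  have d2 : ((m : ℚ) + 1) ≠ 0 := by positivity
  have d3 : ((m : ℚ) + 2) ≠ 0 := by positivity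
  have d4 : ((m : ℚ) + 1 + (j + 1)) ≠ 0 := by positivity
  have E1 : A2 = ((m : ℚ) + 2) * A1 / ((m : ℚ) + 1 - j) := by
    field_simp; linarith [q1]
  have E2 : A0 = ((m : ℚ) - j) * A1 / ((m : ℚ) + 1) := by
    field_simp; linarith [q2]
  have E3 : B2 = ((m : ℚ) + 1 + (j + 1) + 1) * B1 / ((m : ℚ) + 2) := by
    field_simp; linarith [q3]
  have E4 : B0 = ((m : ℚ) + 1) * B1 / ((m : ℚ) + 1 + (j + 1)) := by
    field_simp; linarith [q4]
  have E5 : A1' = ((j : ℚ) + 1) * A1 / ((m : ℚ) + 1 - j) := by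
    field_simp; linarith [q5]
  have E6 : B1' = ((j : ℚ) + 1) * B1 / ((m : ℚ) + 1 + (j + 1)) := by
    field_simp; linarith [q6]
  rw [E1, E2, E3, E4, E5, E6]
  push_cast
  field_simp
  ring

set_option maxHeartbeats 1000000 in
lemma key_top (m : ℕ) :
    ((m : ℚ) + 2) ^ 3 * cc (m + 2) (m + 2) = -Bc m (m + 1) := by
  have S1 := Nat.add_one_mul_choose_eq (m + 1 + (m + 1)) (m + 1)
  have S2 := Nat.choose_mul_succ_eq (m + 1 + (m + 1) + 1) (m + 2)
  rw [show m + 1 + 1 = m + 2 from by omega] at S1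
  rw [show m + 1 + (m + 1) + 1 + 1 - (m + 2) = m + 2 from by omega,
      show m + 1 + (m + 1) + 1 + 1 = m + 2 + (m + 2) from by omega] at S2
  have q1 := congrArg (Nat.cast : ℕ → ℚ) S1
  have q2 := congrArg (Nat.cast : ℕ → ℚ) S2
  push_cast at q1 q2
  simp only [cc, Bc, Nat.choose_self, Nat.cast_one, one_pow, one_mul]
  set X : ℚ := ((m + 1 + (m + 1)).choose (m + 1) : ℚ)
  set Z : ℚ := ((m + 1 + (m + 1) + 1).choose (m + 2) : ℚ)
  set Y : ℚ := ((m + 2 + (m + 2)).choose (m + 2) : ℚ)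
  have hXY : ((m : ℚ) + 2) ^ 2 * Y = (2 * (m : ℚ) + 3) * (2 * (m : ℚ) + 4) * X := by
    nlinarith [q1, q2]
  push_cast
  have d3 : ((m : ℚ) + 2) ≠ 0 := by positivity
  apply mul_left_cancel₀ d3
  linear_combination (((m : ℚ) + 2) ^ 2 * Y + (2 * (m : ℚ) + 3) * (2 * (m : ℚ) + 4) * X) * hXY

/-- The key per-k certificate identity. -/
lemma key (m : ℕ) : ∀ k ≤ m + 2,
    ((m : ℚ) + 2) ^ 3 * cc (m + 2) k
      - (2 * (m : ℚ) + 3) * (17 * (m : ℚ) ^ 2 + 51 * m + 39) * cc (m + 1) k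
      + ((m : ℚ) + 1) ^ 3 * cc m k = hc m (k + 1) - hc m k := by
  intro k hk
  match k, hk with
  | 0, _ =>
      simp only [cc, Bc, hc, Nat.choose_zero_right, Nat.add_zero, Nat.choose_self]
      push_cast
      ring
  | (j + 1), hk =>
    rcases Nat.lt_or_ge j (m + 1) with hj | hj
    · have := key_mid m j (by omega)
      simpa only [hc] using this
    · have hkeq : j = m + 1 := by omega
      subst hkeq
      have c1 : cc (m + 1) (m + 1 + 1) = 0 := cc_zero_of_lt (by omega)
      have c2 : cc m (m + 1 + 1) = 0 := cc_zero_of_lt (by omega)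
      have hBtop : Bc m (m + 1 + 1) = 0 := by
        simp only [Bc, c1, mul_zero]
      simp only [hc, hBtop, c1, c2, mul_zero, add_zero, sub_zero, zero_sub]
      have := key_top m
      rw [show m + 1 + 1 = m + 2 from by omega]
      linarith [this]

lemma aperyA_cast (p M : ℕ) (hp : p ≤ M) :
    (aperyA p : ℚ) = ∑ k ∈ range (M + 1), cc p k := by
  have h1 : ∑ k ∈ range (M + 1), cc p k = ∑ k ∈ range (p + 1), cc p k := by
    refine (Finset.sum_subset (Finset.range_subset_range.2 (by omega)) ?_).symm
    intro x _ hx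
    exact cc_zero_of_lt (by simp at hx; omega)
  rw [h1, aperyA]
  push_cast
  exact Finset.sum_congr rfl fun k _ => by simp [cc]

/-- The Apéry numbers satisfy Apéry's recurrence. -/
lemma aperyA_rec (m : ℕ) :
    ((m : ℚ) + 2) ^ 3 * (aperyA (m + 2) : ℚ)
      - (2 * (m : ℚ) + 3) * (17 * (m : ℚ) ^ 2 + 51 * m + 39) * (aperyA (m + 1) : ℚ)
      + ((m : ℚ) + 1) ^ 3 * (aperyA m : ℚ) = 0 := by
  rw [aperyA_cast (m + 2) (m + 2) (by omega), aperyA_cast (m + 1) (m + 2) (by omega),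
    aperyA_cast m (m + 2) (by omega)]
  rw [Finset.mul_sum, Finset.mul_sum, Finset.mul_sum, ← Finset.sum_sub_distrib,
    ← Finset.sum_add_distrib]
  have : ∑ k ∈ range (m + 3),
      (((m : ℚ) + 2) ^ 3 * cc (m + 2) k
        - (2 * (m : ℚ) + 3) * (17 * (m : ℚ) ^ 2 + 51 * m + 39) * cc (m + 1) k
        + ((m : ℚ) + 1) ^ 3 * cc m k)
      = ∑ k ∈ range (m + 3), (hc m (k + 1) - hc m k) :=
    Finset.sum_congr rfl fun k hk => key m k (by simp at hk; omega)
  rw [this, Finset.sum_range_sub (hc m)]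
  simp [hc, Bc, cc_zero_of_lt (by omega : m + 1 < m + 2)]

/-- The solution of Apéry's recurrence with v₀ = 1, v₁ = 5 is integral. -/
theorem apery_v_integral (v : ℕ → ℚ)
    (h0 : v 0 = 1) (h1 : v 1 = 5)
    (hrec : ∀ n : ℕ, 1 ≤ n →
      ((n : ℚ) + 1) ^ 3 * v (n + 1)
        - (2 * n + 1) * (17 * n ^ 2 + 17 * n + 5) * v n
        + (n : ℚ) ^ 3 * v (n - 1) = 0) :
    ∀ n : ℕ, ∃ m : ℤ, v n = m := by
  have a0 : (aperyA 0 : ℚ) = 1 := by simp [aperyA]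
  have a1 : (aperyA 1 : ℚ) = 5 := by
    simp [aperyA, Finset.sum_range_succ]
  have main : ∀ n, v n = (aperyA n : ℚ) ∧ v (n + 1) = (aperyA (n + 1) : ℚ) := by
    intro n
    induction n with
    | zero => exact ⟨by rw [h0, a0], by rw [h1, a1]⟩
    | succ n ih =>
      refine ⟨ih.2, ?_⟩
      have h := hrec (n + 1) (by omega)
      simp only [Nat.add_sub_cancel] at h
      push_cast at h
      have h2 := aperyA_rec n
      have hne : ((n : ℚ) + 2) ^ 3 ≠ 0 := by positivity
      have hkey : ((n : ℚ) + 2) ^ 3 * v (n + 1 + 1)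
          = ((n : ℚ) + 2) ^ 3 * (aperyA (n + 1 + 1) : ℚ) := by
        have i1 := ih.1
        have i2 := ih.2
        linear_combination h - h2 + (2 * (n : ℚ) + 3) * (17 * (n : ℚ) ^ 2 + 51 * n + 39) * i2
          - ((n : ℚ) + 1) ^ 3 * i1
      exact mul_left_cancel₀ hne hkey
  intro n
  exact ⟨aperyA n, (main n).1⟩
end

section
/- The Beukers triple integral I_0 = (1/2) ∫_0^1∫_0^1∫_0^1 dx dy dz / (1 - (1-xy)z) equals ζ(3). -/
open MeasureTheory Real Set

private lemma intA (n : ℕ) : ∫ y in Set.Ioo (0:ℝ) 1, y ^ n = 1 / ((n:ℝ)+1) := by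
  rw [← integral_Ioc_eq_integral_Ioo, ← intervalIntegral.integral_of_le zero_le_one,
    integral_pow]
  simp

private lemma integrableA (n : ℕ) : IntegrableOn (fun y : ℝ => y ^ n) (Set.Ioo 0 1) :=
  ((continuous_pow n).integrableOn_Icc (a := 0) (b := 1)).mono_set Set.Ioo_subset_Icc_self

private lemma integrableB (n : ℕ) :
    IntegrableOn (fun y : ℝ => y ^ n * (-Real.log y)) (Set.Ioo 0 1) := by
  have hg : IntegrableOn (fun y : ℝ => 2 * y ^ (-(1/2) : ℝ)) (Set.Ioo 0 1) := by
    exact ((intervalIntegral.integrableOn_Ioo_rpow_iff one_pos).2 (by norm_num)).const_mul 2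
  refine Integrable.mono hg ?_ ?_
  · exact ((measurable_id.pow_const n).mul Real.measurable_log.neg).aestronglyMeasurable
  · rw [ae_restrict_iff' measurableSet_Ioo]
    filter_upwards with y hy
    obtain ⟨hy0, hy1⟩ := hy
    have hlog : 0 ≤ -Real.log y := by
      simp only [neg_nonneg]; exact Real.log_nonpos hy0.le hy1.le
    have h1 : ‖y ^ n * (-Real.log y)‖ = y ^ n * (-Real.log y) := by
      rw [Real.norm_eq_abs, abs_of_nonneg (mul_nonneg (pow_nonneg hy0.le n) hlog)]
    rw [h1]
    have h2 : y ^ n * (-Real.log y) ≤ -Real.log y := by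
      nlinarith [pow_le_one₀ hy0.le hy1.le (n := n), pow_nonneg hy0.le n]
    have hsq : 0 < Real.sqrt y := Real.sqrt_pos.2 hy0
    have h3 : -Real.log y ≤ 2 * y ^ (-(1/2) : ℝ) := by
      have : Real.log (1 / Real.sqrt y) ≤ 1 / Real.sqrt y - 1 :=
        Real.log_le_sub_one_of_pos (by positivity)
      rw [Real.log_div one_ne_zero hsq.ne', Real.log_one, Real.log_sqrt hy0.le] at this
      have h4 : y ^ (-(1/2) : ℝ) = 1 / Real.sqrt y := by
        rw [Real.rpow_neg hy0.le, Real.sqrt_eq_rpow]; norm_num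
      rw [h4]; linarith
    rw [Real.norm_eq_abs, abs_of_nonneg (by positivity)]
    linarith

private lemma intB (n : ℕ) :
    ∫ y in Set.Ioo (0:ℝ) 1, y ^ n * (-Real.log y) = 1 / ((n:ℝ)+1) ^ 2 := by
  have hn : ((n:ℝ) + 1) ≠ 0 := by positivity
  set F : ℝ → ℝ := fun y => y ^ (n+1) / ((n:ℝ)+1) ^ 2 - y ^ (n+1) * Real.log y / ((n:ℝ)+1)
    with hF
  have hFeq : F = fun y => y ^ (n+1) / ((n:ℝ)+1) ^ 2 - y ^ n * (y * Real.log y) / ((n:ℝ)+1) := by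
    funext y; simp only [hF, pow_succ]; ring
  have hcont : ContinuousOn F (Set.Icc 0 1) := by
    rw [hFeq]
    exact (((continuous_pow (n+1)).div_const _).sub
      (((continuous_pow n).mul Real.continuous_mul_log).div_const _)).continuousOn
  have hderiv : ∀ y ∈ Set.Ioo (0:ℝ) 1, HasDerivAt F (y ^ n * (-Real.log y)) y := by
    intro y hy
    have hy0 : y ≠ 0 := hy.1.ne'
    have h1 : HasDerivAt (fun y : ℝ => y ^ (n+1)) (((n:ℝ)+1) * y ^ n) y := by
      simpa using hasDerivAt_pow (n+1) y
    have h2 : HasDerivAt Real.log (1/y) y := by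
      simpa [one_div] using Real.hasDerivAt_log hy0
    have h3 : HasDerivAt (fun y : ℝ => y ^ (n+1) * Real.log y)
        (((n:ℝ)+1) * y ^ n * Real.log y + y ^ (n+1) * (1/y)) y := h1.mul h2
    have h5 : HasDerivAt F
        ((((n:ℝ)+1) * y ^ n) / ((n:ℝ)+1) ^ 2
          - (((n:ℝ)+1) * y ^ n * Real.log y + y ^ (n+1) * (1/y)) / ((n:ℝ)+1)) y :=
      (h1.div_const _).sub (h3.div_const _)
    convert h5 using 1
    have : y ^ (n+1) * (1/y) = y ^ n := by
      rw [pow_succ]; field_simp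
    rw [this]; field_simp; ring
  have key : ∫ y in (0:ℝ)..1, y ^ n * (-Real.log y) = F 1 - F 0 := by
    refine intervalIntegral.integral_eq_sub_of_hasDeriv_right_of_le zero_le_one hcont
      (fun y hy => (hderiv y hy).hasDerivWithinAt) ?_
    rw [intervalIntegrable_iff_integrableOn_Ioc_of_le zero_le_one]
    exact (integrableB n).congr_set_ae Ioo_ae_eq_Ioc.symm
  rw [← integral_Ioc_eq_integral_Ioo, ← intervalIntegral.integral_of_le zero_le_one, key]
  simp [hF]

private lemma intZ {x y : ℝ} (hx : x ∈ Set.Ioo (0:ℝ) 1) (hy : y ∈ Set.Ioo (0:ℝ) 1) :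
    ∫ z in Set.Ioo (0:ℝ) 1, 1 / (1 - (1 - x * y) * z)
      = -Real.log (x * y) / (1 - x * y) := by
  set a : ℝ := 1 - x * y with ha
  have hxy0 : 0 < x * y := mul_pos hx.1 hy.1
  have hxy1 : x * y < 1 := by
    calc x * y < 1 * 1 := by
          apply mul_lt_mul' hx.2.le hy.2 hy.1.le one_pos
    _ = 1 := by norm_num
  have ha0 : 0 < a := by simp [ha]; linarith
  have ha1 : a < 1 := by simp [ha]; linarith
  have hden : ∀ z ∈ Set.Icc (0:ℝ) 1, 0 < 1 - a * z := by
    intro z hz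
    nlinarith [hz.1, hz.2]
  set F : ℝ → ℝ := fun z => -(Real.log (1 - a * z)) / a with hFdef
  have hderiv : ∀ z ∈ Set.uIcc (0:ℝ) 1, HasDerivAt F (1 / (1 - a * z)) z := by
    intro z hz
    rw [Set.uIcc_of_le zero_le_one] at hz
    have h0 : (1 - a * z) ≠ 0 := (hden z hz).ne'
    have h1 : HasDerivAt (fun z : ℝ => 1 - a * z) (-a) z := by
      simpa using ((hasDerivAt_id z).const_mul a).const_sub 1
    have h2 : HasDerivAt (fun z : ℝ => Real.log (1 - a * z)) (-a / (1 - a * z)) z :=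
      h1.log h0
    have h3 : HasDerivAt F (-(-a / (1 - a * z)) / a) z := (h2.neg).div_const a
    convert h3 using 1
    field_simp
  have hcont : ContinuousOn (fun z : ℝ => 1 / (1 - a * z)) (Set.uIcc (0:ℝ) 1) := by
    rw [Set.uIcc_of_le zero_le_one]
    refine ContinuousOn.div continuousOn_const ?_ (fun z hz => (hden z hz).ne')
    fun_prop
  have key : ∫ z in (0:ℝ)..1, 1 / (1 - a * z) = F 1 - F 0 :=
    intervalIntegral.integral_eq_sub_of_hasDerivAt hderiv
      (hcont.intervalIntegrable)
  rw [← integral_Ioc_eq_integral_Ioo, ← intervalIntegral.integral_of_le zero_le_one, key]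
  simp only [hFdef]
  rw [mul_one, mul_zero]
  have : (1 : ℝ) - a = x * y := by simp [ha]
  rw [this]
  simp [neg_div, ha]

private lemma series_pt {t : ℝ} (ht0 : 0 < t) (ht1 : t < 1) :
    -Real.log t / (1 - t) = ∑' n : ℕ, t ^ n * (-Real.log t) := by
  rw [tsum_mul_right, tsum_geometric_of_lt_one ht0.le ht1, div_eq_mul_inv, mul_comm]

private lemma lint_eq {α : Type*} [MeasurableSpace α] {μ : Measure α} {f : α → ℝ}
    (hf : Integrable f μ) (h : 0 ≤ᵐ[μ] f) :
    ∫⁻ a, ‖f a‖₊ ∂μ = ENNReal.ofReal (∫ a, f a ∂μ) := by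
  rw [ofReal_integral_eq_lintegral_ofReal hf h]
  refine lintegral_congr_ae ?_
  filter_upwards [h] with a ha
  rw [Real.nnnorm_of_nonneg ha, ENNReal.ofReal_eq_coe_nnreal ha]

private lemma fsplit {x : ℝ} (hx0 : 0 < x) (n : ℕ) {y : ℝ} (hy : y ∈ Set.Ioo (0:ℝ) 1) :
    (x*y) ^ n * (-Real.log (x*y))
      = (x ^ n * (-Real.log x)) * y ^ n + x ^ n * (y ^ n * (-Real.log y)) := by
  rw [Real.log_mul hx0.ne' hy.1.ne', mul_pow]
  ring

private lemma integrable_f {x : ℝ} (hx : x ∈ Set.Ioo (0:ℝ) 1) (n : ℕ) :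
    IntegrableOn (fun y : ℝ => (x*y) ^ n * (-Real.log (x*y))) (Set.Ioo 0 1) := by
  exact IntegrableOn.congr_fun
    (((integrableA n).const_mul (x ^ n * (-Real.log x))).add
      ((integrableB n).const_mul (x ^ n)))
    (fun y hy => (fsplit hx.1 n hy).symm) measurableSet_Ioo

private lemma integral_f {x : ℝ} (hx : x ∈ Set.Ioo (0:ℝ) 1) (n : ℕ) :
    ∫ y in Set.Ioo (0:ℝ) 1, (x*y) ^ n * (-Real.log (x*y))
      = x ^ n * (-Real.log x) / ((n:ℝ)+1) + x ^ n / ((n:ℝ)+1) ^ 2 := by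
  rw [setIntegral_congr_fun measurableSet_Ioo (fun y hy => fsplit hx.1 n hy)]
  rw [integral_add (((integrableA n).const_mul _)) ((integrableB n).const_mul _),
    integral_const_mul, integral_const_mul, intA, intB]
  ring

private lemma summable_c {x : ℝ} (hx : x ∈ Set.Ioo (0:ℝ) 1) :
    Summable (fun n : ℕ => x ^ n * (-Real.log x) / ((n:ℝ)+1) + x ^ n / ((n:ℝ)+1) ^ 2) := by
  have hlog : 0 ≤ -Real.log x := by
    simp only [neg_nonneg]; exact Real.log_nonpos hx.1.le hx.2.le
  have hgeo : Summable (fun n : ℕ => x ^ n) := summable_geometric_of_lt_one hx.1.le hx.2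
  refine Summable.add ?_ ?_
  · refine Summable.of_nonneg_of_le
      (fun n => div_nonneg (mul_nonneg (pow_nonneg hx.1.le n) hlog) (by positivity)) (fun n => ?_)
      (hgeo.mul_left (-Real.log x))
    rw [div_le_iff₀ (by positivity)]
    have h1 : (1:ℝ) ≤ (n:ℝ)+1 := by simp
    nlinarith [mul_nonneg hlog (pow_nonneg hx.1.le n)]
  · refine Summable.of_nonneg_of_le
      (fun n => div_nonneg (pow_nonneg hx.1.le n) (by positivity)) (fun n => ?_) hgeo
    rw [div_le_iff₀ (by positivity)]
    have h1 : (1:ℝ) ≤ ((n:ℝ)+1)^2 := by nlinarith [Nat.cast_nonneg (α := ℝ) n]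
    nlinarith [pow_nonneg hx.1.le n]

private lemma c_nonneg {x : ℝ} (hx : x ∈ Set.Ioo (0:ℝ) 1) (n : ℕ) :
    0 ≤ x ^ n * (-Real.log x) / ((n:ℝ)+1) + x ^ n / ((n:ℝ)+1) ^ 2 := by
  have hlog : 0 ≤ -Real.log x := by
    simp only [neg_nonneg]; exact Real.log_nonpos hx.1.le hx.2.le
  have h2 := pow_nonneg hx.1.le n
  have : 0 ≤ x ^ n * (-Real.log x) / ((n:ℝ)+1) :=
    div_nonneg (mul_nonneg h2 hlog) (by positivity)
  have : 0 ≤ x ^ n / ((n:ℝ)+1) ^ 2 := div_nonneg h2 (by positivity)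
  linarith

private lemma intY {x : ℝ} (hx : x ∈ Set.Ioo (0:ℝ) 1) :
    ∫ y in Set.Ioo (0:ℝ) 1, -Real.log (x*y) / (1 - x*y)
      = ∑' n : ℕ, (x ^ n * (-Real.log x) / ((n:ℝ)+1) + x ^ n / ((n:ℝ)+1) ^ 2) := by
  have step1 : ∫ y in Set.Ioo (0:ℝ) 1, -Real.log (x*y) / (1 - x*y)
      = ∫ y in Set.Ioo (0:ℝ) 1, ∑' n : ℕ, (x*y) ^ n * (-Real.log (x*y)) := by
    refine setIntegral_congr_fun measurableSet_Ioo (fun y hy => ?_)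
    have hxy0 : 0 < x * y := mul_pos hx.1 hy.1
    have hxy1 : x * y < 1 := by nlinarith [hx.1, hx.2, hy.1, hy.2]
    exact series_pt hxy0 hxy1
  rw [step1]
  have hmeas : ∀ n : ℕ, AEStronglyMeasurable
      (fun y : ℝ => (x*y) ^ n * (-Real.log (x*y)))
      (volume.restrict (Set.Ioo (0:ℝ) 1)) := by
    intro n
    exact (((measurable_const.mul measurable_id).pow_const n).mul
      ((Real.measurable_log.comp (measurable_const.mul measurable_id)).neg)).aestronglyMeasurable
  have hnonneg : ∀ n : ℕ, (0:ℝ → ℝ) ≤ᵐ[volume.restrict (Set.Ioo (0:ℝ) 1)]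
      (fun y : ℝ => (x*y) ^ n * (-Real.log (x*y))) := by
    intro n
    filter_upwards [ae_restrict_mem measurableSet_Ioo] with y hy
    have hxy0 : 0 < x * y := mul_pos hx.1 hy.1
    have hxy1 : x * y < 1 := by nlinarith [hx.1, hx.2, hy.1, hy.2]
    have h0 : 0 ≤ -Real.log (x*y) := by
      simp only [neg_nonneg]; exact Real.log_nonpos hxy0.le hxy1.le
    show (0:ℝ) ≤ (x*y) ^ n * (-Real.log (x*y))
    positivity
  have hlint : ∑' n : ℕ, ∫⁻ y in Set.Ioo (0:ℝ) 1, ‖(x*y) ^ n * (-Real.log (x*y))‖₊ ≠ ⊤ := by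
    have heq : ∀ n : ℕ, ∫⁻ y in Set.Ioo (0:ℝ) 1, ‖(x*y) ^ n * (-Real.log (x*y))‖₊
        = ENNReal.ofReal (x ^ n * (-Real.log x) / ((n:ℝ)+1) + x ^ n / ((n:ℝ)+1) ^ 2) := by
      intro n
      rw [lint_eq (integrable_f hx n) (hnonneg n), integral_f hx n]
    simp_rw [heq]
    rw [← ENNReal.ofReal_tsum_of_nonneg (c_nonneg hx) (summable_c hx)]
    exact ENNReal.ofReal_ne_top
  rw [integral_tsum hmeas hlint]
  exact tsum_congr (fun n => integral_f hx n)

private lemma summable_d :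
    Summable (fun n : ℕ => 2 / ((n:ℝ)+1) ^ 3) := by
  have h1 : Summable (fun n : ℕ => 1 / ((n:ℝ)) ^ 3) :=
    Real.summable_one_div_nat_pow.2 (by norm_num)
  have h2 : Summable (fun n : ℕ => 1 / ((n:ℝ)+1) ^ 3) := by
    have := (summable_nat_add_iff (f := fun n : ℕ => 1 / ((n:ℝ)) ^ 3) 1).2 h1
    refine this.congr (fun n => ?_)
    push_cast
    ring
  simpa [div_eq_mul_inv, mul_comm] using h2.mul_left 2

private lemma integrable_g (n : ℕ) :
    IntegrableOn (fun x : ℝ => x ^ n * (-Real.log x) / ((n:ℝ)+1) + x ^ n / ((n:ℝ)+1) ^ 2)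
      (Set.Ioo 0 1) :=
  ((integrableB n).div_const _).add ((integrableA n).div_const _)

private lemma integral_g (n : ℕ) :
    ∫ x in Set.Ioo (0:ℝ) 1, (x ^ n * (-Real.log x) / ((n:ℝ)+1) + x ^ n / ((n:ℝ)+1) ^ 2)
      = 2 / ((n:ℝ)+1) ^ 3 := by
  rw [integral_add ((integrableB n).div_const _) ((integrableA n).div_const _),
    integral_div, integral_div, intA, intB]
  have hn : ((n:ℝ) + 1) ≠ 0 := by positivity
  field_simp
  ring

private lemma intX :
    ∫ x in Set.Ioo (0:ℝ) 1,
        (∑' n : ℕ, (x ^ n * (-Real.log x) / ((n:ℝ)+1) + x ^ n / ((n:ℝ)+1) ^ 2))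
      = ∑' n : ℕ, 2 / ((n:ℝ)+1) ^ 3 := by
  have hmeas : ∀ n : ℕ, AEStronglyMeasurable
      (fun x : ℝ => x ^ n * (-Real.log x) / ((n:ℝ)+1) + x ^ n / ((n:ℝ)+1) ^ 2)
      (volume.restrict (Set.Ioo (0:ℝ) 1)) := by
    intro n
    exact ((((measurable_id.pow_const n).mul Real.measurable_log.neg).div_const _).add
      ((measurable_id.pow_const n).div_const _)).aestronglyMeasurable
  have hnonneg : ∀ n : ℕ, (0:ℝ → ℝ) ≤ᵐ[volume.restrict (Set.Ioo (0:ℝ) 1)]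
      (fun x : ℝ => x ^ n * (-Real.log x) / ((n:ℝ)+1) + x ^ n / ((n:ℝ)+1) ^ 2) := by
    intro n
    filter_upwards [ae_restrict_mem measurableSet_Ioo] with x hxm
    exact c_nonneg hxm n
  have hlint : ∑' n : ℕ, ∫⁻ x in Set.Ioo (0:ℝ) 1,
      ‖x ^ n * (-Real.log x) / ((n:ℝ)+1) + x ^ n / ((n:ℝ)+1) ^ 2‖₊ ≠ ⊤ := by
    have heq : ∀ n : ℕ, ∫⁻ x in Set.Ioo (0:ℝ) 1,
        ‖x ^ n * (-Real.log x) / ((n:ℝ)+1) + x ^ n / ((n:ℝ)+1) ^ 2‖₊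
        = ENNReal.ofReal (2 / ((n:ℝ)+1) ^ 3) := by
      intro n
      rw [lint_eq (integrable_g n) (hnonneg n), integral_g n]
    simp_rw [heq]
    rw [← ENNReal.ofReal_tsum_of_nonneg (fun n => by positivity) summable_d]
    exact ENNReal.ofReal_ne_top
  rw [integral_tsum hmeas hlint]
  exact tsum_congr (fun n => integral_g n)

/-- The Beukers triple integral `I₀` equals `ζ(3)`. -/
theorem beukers_integral_zero :
    (1 / 2 : ℝ) * ∫ x in Set.Ioo (0:ℝ) 1, ∫ y in Set.Ioo (0:ℝ) 1,
        ∫ z in Set.Ioo (0:ℝ) 1, 1 / (1 - (1 - x * y) * z)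
      = ∑' n : ℕ, 1 / ((n : ℝ) + 1) ^ 3 := by
  have step : ∫ x in Set.Ioo (0:ℝ) 1, (∫ y in Set.Ioo (0:ℝ) 1,
        ∫ z in Set.Ioo (0:ℝ) 1, 1 / (1 - (1 - x * y) * z))
      = ∑' n : ℕ, 2 / ((n:ℝ)+1) ^ 3 := by
    rw [← intX]
    refine setIntegral_congr_fun measurableSet_Ioo (fun x hx => ?_)
    have h1 : ∫ y in Set.Ioo (0:ℝ) 1, ∫ z in Set.Ioo (0:ℝ) 1, 1 / (1 - (1 - x * y) * z)
        = ∫ y in Set.Ioo (0:ℝ) 1, -Real.log (x*y) / (1 - x*y) :=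
      setIntegral_congr_fun measurableSet_Ioo (fun y hy => intZ hx hy)
    rw [h1, intY hx]
  rw [step, ← tsum_mul_left]
  refine tsum_congr (fun n => ?_)
  have hn : ((n:ℝ) + 1) ≠ 0 := by positivity
  field_simp
end

section
/- With u_n, v_n as in Apéry's proof, u_n/v_n ≠ ζ(3) for every n, and u_n/v_n → ζ(3) as n → ∞; consequently ζ(3) is irrational (given the arithmetic facts v_n ∈ ℤ and D_n^3 u_n ∈ ℤ and D_n^3(v_n ζ(3) - u_n) → 0). -/
open Filter

/-- `D n` is the least common multiple of `1, 2, ..., n`. -/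
def aperyD (n : ℕ) : ℕ := (Finset.Icc 1 n).lcm id

/-- With `u_n, v_n` as in Apéry's proof, `u_n/v_n ≠ ζ(3)` for every `n`,
`u_n/v_n → ζ(3)`, and (given the arithmetic facts) `ζ(3)` is irrational. -/
theorem apery_limit_and_irrationality (u v : ℕ → ℚ)
    (hu0 : u 0 = 0) (hu1 : u 1 = 6) (hv0 : v 0 = 1) (hv1 : v 1 = 5)
    (hurec : ∀ n : ℕ, 1 ≤ n →
      ((n : ℚ) + 1) ^ 3 * u (n + 1)
        - (2 * n + 1) * (17 * n ^ 2 + 17 * n + 5) * u n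
        + (n : ℚ) ^ 3 * u (n - 1) = 0)
    (hvrec : ∀ n : ℕ, 1 ≤ n →
      ((n : ℚ) + 1) ^ 3 * v (n + 1)
        - (2 * n + 1) * (17 * n ^ 2 + 17 * n + 5) * v n
        + (n : ℚ) ^ 3 * v (n - 1) = 0)
    (hvint : ∀ n : ℕ, ∃ m : ℤ, v n = m)
    (huint : ∀ n : ℕ, 1 ≤ n → ∃ m : ℤ, (aperyD n : ℚ) ^ 3 * u n = m)
    (hlin : Tendsto
      (fun n : ℕ => (aperyD n : ℝ) ^ 3 *
        ((v n : ℝ) * (∑' k : ℕ, 1 / ((k : ℝ) + 1) ^ 3) - (u n : ℝ)))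
      atTop (nhds 0)) :
    (∀ n : ℕ, (u n : ℝ) / (v n : ℝ) ≠ ∑' k : ℕ, 1 / ((k : ℝ) + 1) ^ 3) ∧
    Tendsto (fun n : ℕ => (u n : ℝ) / (v n : ℝ)) atTop
      (nhds (∑' k : ℕ, 1 / ((k : ℝ) + 1) ^ 3)) ∧
    Irrational (∑' k : ℕ, 1 / ((k : ℝ) + 1) ^ 3) := by
  set ζ : ℝ := ∑' k : ℕ, 1 / ((k : ℝ) + 1) ^ 3 with hζdef
  -- v is increasing and at least 1
  have hvm : ∀ n, 1 ≤ v n ∧ v n ≤ v (n + 1) := by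
    intro n
    induction n with
    | zero => rw [hv0, hv1]; norm_num
    | succ n ih =>
      obtain ⟨h1, h2⟩ := ih
      have hr := hvrec (n + 1) (by omega)
      simp only [Nat.add_sub_cancel] at hr
      push_cast at hr
      have hc : (0:ℚ) ≤ (n:ℚ) := Nat.cast_nonneg n
      have h1' : (1:ℚ) ≤ v (n+1) := le_trans h1 h2
      refine ⟨h1', ?_⟩
      nlinarith [mul_nonneg (sub_nonneg.2 h2) (by positivity : (0:ℚ) ≤ ((n:ℚ)+1)^3),
        mul_nonneg hc (sub_nonneg.2 h1'), sq_nonneg (n:ℚ), mul_nonneg (mul_nonneg hc hc) hc,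
        mul_nonneg (mul_nonneg hc hc) (sub_nonneg.2 h1'),
        mul_nonneg hc (mul_nonneg hc (sub_nonneg.2 h1'))]
  have hvR : ∀ n, (1:ℝ) ≤ (v n : ℝ) := by
    intro n; exact_mod_cast (hvm n).1
  have hvne : ∀ n, (v n : ℝ) ≠ 0 := fun n => by have := hvR n; linarith
  -- Casoratian identity
  have hw : ∀ n : ℕ, v n * u (n + 1) - u n * v (n + 1) = 6 / ((n : ℚ) + 1) ^ 3 := by
    intro n
    induction n with
    | zero => rw [hu0, hu1, hv0, hv1]; norm_num
    | succ n ih =>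
      have hru := hurec (n + 1) (by omega)
      have hrv := hvrec (n + 1) (by omega)
      simp only [Nat.add_sub_cancel] at hru hrv
      push_cast at hru hrv ⊢
      have h1 : ((n:ℚ) + 1) ^ 3 ≠ 0 := by positivity
      have h2 : ((n:ℚ) + 1 + 1) ^ 3 ≠ 0 := by positivity
      field_simp at ih ⊢
      linear_combination (v (n+1) * hru - u (n+1) * hrv) + ih
  -- D_n ≥ 1
  have hD : ∀ n, (1:ℝ) ≤ (aperyD n : ℝ) := by
    intro n
    have h : aperyD n ≠ 0 := by
      unfold aperyD
      intro h
      rw [Finset.lcm_eq_zero_iff] at h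
      simp at h
    exact_mod_cast Nat.one_le_iff_ne_zero.2 h
  -- the linear form bound
  have hbound : ∀ n, ‖(v n : ℝ) * ζ - (u n : ℝ)‖ ≤
      |(aperyD n : ℝ) ^ 3 * ((v n : ℝ) * ζ - (u n : ℝ))| := by
    intro n
    rw [Real.norm_eq_abs, abs_mul]
    refine le_mul_of_one_le_left (abs_nonneg _) ?_
    rw [abs_of_nonneg (by positivity)]
    calc (1:ℝ) = 1 ^ 3 := by norm_num
      _ ≤ (aperyD n : ℝ) ^ 3 := by gcongr; exact hD n
  have hlinabs : Tendsto (fun n : ℕ =>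
      |(aperyD n : ℝ) ^ 3 * ((v n : ℝ) * ζ - (u n : ℝ))|) atTop (nhds 0) := by
    simpa using hlin.abs
  -- Irrationality
  have hirr : Irrational ζ := by
    rintro ⟨q, hq⟩
    have hqden : ((q.den : ℝ)) ≠ 0 := Nat.cast_ne_zero.2 q.den_nz
    have hq' : (q.den : ℝ) * ζ = (q.num : ℝ) := by
      rw [← hq, Rat.cast_def]
      field_simp
    have key : ∀ n, 1 ≤ n → ∃ I : ℤ,
        (q.den : ℝ) * ((aperyD n : ℝ) ^ 3 * ((v n : ℝ) * ζ - (u n : ℝ))) = I := by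
      intro n hn
      obtain ⟨m, hm⟩ := hvint n
      obtain ⟨k, hk⟩ := huint n hn
      refine ⟨q.num * (aperyD n) ^ 3 * m - q.den * k, ?_⟩
      have hmR : ((v n : ℝ)) = (m : ℝ) := by exact_mod_cast congrArg (fun x : ℚ => (x : ℝ)) hm
      have hkR : (aperyD n : ℝ) ^ 3 * (u n : ℝ) = (k : ℝ) := by exact_mod_cast hk
      push_cast
      linear_combination (aperyD n : ℝ) ^ 3 * (v n : ℝ) * hq'
        + (q.num : ℝ) * (aperyD n : ℝ) ^ 3 * hmR - (q.den : ℝ) * hkR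
    have htend : Tendsto (fun n : ℕ =>
        (q.den : ℝ) * ((aperyD n : ℝ) ^ 3 * ((v n : ℝ) * ζ - (u n : ℝ)))) atTop (nhds 0) := by
      simpa using hlin.const_mul (q.den : ℝ)
    have hev : ∀ᶠ n in atTop, |(q.den : ℝ) *
        ((aperyD n : ℝ) ^ 3 * ((v n : ℝ) * ζ - (u n : ℝ)))| < 1 := by
      have h0 : |(0:ℝ)| < 1 := by norm_num
      simpa using htend.abs.eventually_lt_const (by norm_num : |(0:ℝ)| < 1)
    obtain ⟨N0, hN0⟩ := eventually_atTop.1 hev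
    set N := max N0 1 with hN
    have hz : ∀ n, N ≤ n → (v n : ℝ) * ζ - (u n : ℝ) = 0 := by
      intro n hn
      obtain ⟨I, hI⟩ := key n (le_trans (le_max_right _ _) hn)
      have h1 : |(I:ℝ)| < 1 := by rw [← hI]; exact hN0 n (le_trans (le_max_left _ _) hn)
      have hI0 : I = 0 := by
        have h2 : |I| < 1 := by exact_mod_cast h1
        rw [abs_lt] at h2
        omega
      rw [hI0] at hI
      have hD3 : (aperyD n : ℝ) ^ 3 ≠ 0 := by have := hD n; positivity
      push_cast at hI
      rcases mul_eq_zero.1 hI with h | h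
      · exact absurd h hqden
      · rcases mul_eq_zero.1 h with h' | h'
        · exact absurd h' hD3
        · exact h'
    have hzN := hz N le_rfl
    have hzN1 := hz (N + 1) (by omega)
    have hwN := hw N
    have hcast : ((v N * u (N+1) - u N * v (N+1) : ℚ) : ℝ) = 0 := by
      push_cast
      linear_combination (v (N+1) : ℝ) * hzN - (v N : ℝ) * hzN1
    rw [hwN] at hcast
    push_cast at hcast
    have hpos : (0:ℝ) < 6 / ((N:ℝ) + 1) ^ 3 := by positivity
    linarith
  refine ⟨?_, ?_, hirr⟩
  · intro n h
    exact hirr ⟨u n / v n, by rw [Rat.cast_div]; exact h⟩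
  · have hev2 : Tendsto (fun n : ℕ =>
        ((v n : ℝ) * ζ - (u n : ℝ)) / (v n : ℝ)) atTop (nhds 0) := by
      refine squeeze_zero_norm (fun n => ?_) hlinabs
      rw [Real.norm_eq_abs, abs_div]
      calc |(v n : ℝ) * ζ - (u n : ℝ)| / |(v n : ℝ)|
          ≤ |(v n : ℝ) * ζ - (u n : ℝ)| := by
            apply div_le_self (abs_nonneg _)
            rw [abs_of_nonneg (by linarith [hvR n])]
            exact hvR n
        _ ≤ |(aperyD n : ℝ) ^ 3 * ((v n : ℝ) * ζ - (u n : ℝ))| := by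
            have := hbound n; rwa [Real.norm_eq_abs] at this
    have h2 : Tendsto (fun n : ℕ =>
        ζ - ((v n : ℝ) * ζ - (u n : ℝ)) / (v n : ℝ)) atTop (nhds (ζ - 0)) :=
      tendsto_const_nhds.sub hev2
    rw [sub_zero] at h2
    refine h2.congr fun n => ?_
    field_simp [hvne n]
    ring
end

section
/- For 0 < z < 1 and n ≥ 0, the double integral J_n(z) = ∫_0^1∫_0^1 x^{n-1/2}(1-x)^{n-1/2} y^{n-1/2}(1-y)^n / (1 - zxy)^{n+1/2} dx dy equals Γ(n+1/2)^3 Γ(n+1) / (Γ(2n+1) Γ(2n+3/2)) times the hypergeometric series ₃F₂(n+1/2, n+1/2, n+1/2; 2n+1, 2n+3/2; z). -/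
open MeasureTheory

/-- Pochhammer symbol `(a)_k` for a real `a`. -/
noncomputable def poch (a : ℝ) (k : ℕ) : ℝ := (ascPochhammer ℝ k).eval a

/-- The generalized hypergeometric series `₃F₂(a,b,c;d,e;z)`. -/
noncomputable def F32 (a b c d e z : ℝ) : ℝ :=
  ∑' k : ℕ, poch a k * poch b k * poch c k / (poch d k * poch e k * (k.factorial : ℝ)) * z ^ k

/-- The double integral `J_n(z)`. -/
noncomputable def Jint (n : ℕ) (z : ℝ) : ℝ :=
  ∫ x in Set.Ioo (0:ℝ) 1, ∫ y in Set.Ioo (0:ℝ) 1,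
    x ^ ((n : ℝ) - 1/2) * (1 - x) ^ ((n : ℝ) - 1/2) * y ^ ((n : ℝ) - 1/2) * (1 - y) ^ (n : ℕ)
      / (1 - z * x * y) ^ ((n : ℝ) + 1/2)

open Set Real

lemma poch_zero (a : ℝ) : poch a 0 = 1 := by simp [poch]

lemma poch_succ (a : ℝ) (k : ℕ) : poch a (k+1) = poch a k * (a + k) := by
  simp [poch, ascPochhammer_succ_right]

lemma poch_pos {a : ℝ} (ha : 0 < a) (k : ℕ) : 0 < poch a k :=
  ascPochhammer_pos k a ha

lemma Gamma_poch {a : ℝ} (ha : 0 < a) (k : ℕ) :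
    Real.Gamma (a + k) = Real.Gamma a * poch a k := by
  induction k with
  | zero => simp [poch_zero]
  | succ k ih =>
      have h1 : a + (k+1:ℕ) = (a + k) + 1 := by push_cast; ring
      rw [h1, Real.Gamma_add_one (by positivity), ih, poch_succ]; ring

lemma summable_poch {a : ℝ} (ha : 0 < a) {w : ℝ} (hw0 : 0 < w) (hw1 : w < 1) :
    Summable (fun k : ℕ => poch a k * w ^ k / (k.factorial : ℝ)) := by
  apply summable_of_ratio_test_tendsto_lt_one hw1
  · filter_upwards with k
    have := poch_pos ha k
    positivity
  · have h : ∀ k : ℕ, ‖poch a (k+1) * w ^ (k+1) / ((k+1).factorial : ℝ)‖ /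
        ‖poch a k * w ^ k / (k.factorial : ℝ)‖ = w * ((a + k) / (k+1)) := by
      intro k
      have hp := poch_pos ha k
      have hp' := poch_pos ha (k+1)
      have hak : (0:ℝ) < a + k := by positivity
      rw [Real.norm_of_nonneg (by positivity), Real.norm_of_nonneg (by positivity),
        poch_succ, Nat.factorial_succ]
      push_cast
      field_simp
      ring
    simp_rw [h]
    have : Filter.Tendsto (fun k : ℕ => (a + k) / (k+1)) Filter.atTop (nhds 1) := by
      have h2 : ∀ k : ℕ, (a + k) / ((k:ℝ)+1) = (a - 1) / (k+1) + 1 := by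
        intro k; field_simp; ring
      simp_rw [h2]
      have := Filter.Tendsto.div_atTop (f := fun _ : ℕ => a - 1) tendsto_const_nhds
        (Filter.tendsto_atTop_add_const_right _ 1 tendsto_natCast_atTop_atTop)
      simpa using this.add tendsto_const_nhds
    simpa using (tendsto_const_nhds (x := w)).mul this

lemma beta_eqon {a b : ℝ} : Set.EqOn
    (fun x : ℝ => ((x:ℂ) ^ ((a:ℂ)-1) * ((1:ℂ)-(x:ℂ)) ^ ((b:ℂ)-1)))
    (fun x : ℝ => ((x ^ (a-1) * (1-x) ^ (b-1) : ℝ) : ℂ)) (Set.Ioo 0 1) := by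
  intro x hx
  simp only
  rw [Complex.ofReal_mul, Complex.ofReal_cpow hx.1.le, Complex.ofReal_cpow (by linarith [hx.2])]
  push_cast
  ring_nf

lemma betaIntegrable {a b : ℝ} (ha : 0 < a) (hb : 0 < b) :
    IntegrableOn (fun x : ℝ => x ^ (a-1) * (1-x) ^ (b-1)) (Set.Ioo 0 1) := by
  have h := Complex.betaIntegral_convergent (u := a) (v := b)
    (by simpa using ha) (by simpa using hb)
  have h2 : IntegrableOn (fun x : ℝ => ((x:ℂ) ^ ((a:ℂ)-1) * ((1:ℂ)-(x:ℂ)) ^ ((b:ℂ)-1)))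
      (Set.Ioo 0 1) := by
    have := (intervalIntegrable_iff_integrableOn_Ioc_of_le (by norm_num : (0:ℝ) ≤ 1)).mp h
    exact this.mono_set Set.Ioo_subset_Ioc_self
  have h3 : IntegrableOn (fun x : ℝ => ((x ^ (a-1) * (1-x) ^ (b-1) : ℝ) : ℂ)) (Set.Ioo 0 1) :=
    h2.congr_fun beta_eqon measurableSet_Ioo
  have h4 := h3.re
  simp at h4
  exact h4

lemma betaReal {a b : ℝ} (ha : 0 < a) (hb : 0 < b) :
    ∫ x in Set.Ioo (0:ℝ) 1, x ^ (a-1) * (1-x) ^ (b-1)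
      = Real.Gamma a * Real.Gamma b / Real.Gamma (a+b) := by
  have key : Complex.betaIntegral a b
      = ((∫ x in Set.Ioo (0:ℝ) 1, x ^ (a-1) * (1-x) ^ (b-1) : ℝ) : ℂ) := by
    rw [Complex.betaIntegral, intervalIntegral.integral_of_le (by norm_num : (0:ℝ) ≤ 1),
      integral_Ioc_eq_integral_Ioo]
    rw [setIntegral_congr_fun measurableSet_Ioo beta_eqon]
    exact integral_ofReal
  have hG := Complex.Gamma_mul_Gamma_eq_betaIntegral
    (s := a) (t := b) (by simpa using ha) (by simpa using hb)
  rw [key] at hG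
  have hab : Complex.Gamma ((a:ℂ) + b) = ((Real.Gamma (a+b) : ℝ) : ℂ) := by
    rw [← Complex.ofReal_add, Complex.Gamma_ofReal]
  rw [hab, Complex.Gamma_ofReal, Complex.Gamma_ofReal, ← Complex.ofReal_mul,
    ← Complex.ofReal_mul] at hG
  have := Complex.ofReal_inj.mp hG
  have hne : Real.Gamma (a+b) ≠ 0 := (Real.Gamma_pos_of_pos (by linarith)).ne'
  field_simp
  linarith [this]

lemma real_exp_tsum (x : ℝ) : Real.exp x = ∑' n : ℕ, x ^ n / (n.factorial : ℝ) := by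
  rw [Real.exp_eq_exp_ℝ, NormedSpace.exp_eq_tsum_div]

lemma binom_hasSum {a w : ℝ} (ha : 0 < a) (hw0 : 0 < w) (hw1 : w < 1) :
    HasSum (fun k : ℕ => poch a k * w ^ k / (k.factorial : ℝ)) ((1 - w) ^ (-a)) := by
  have hGa : 0 < Real.Gamma a := Real.Gamma_pos_of_pos ha
  set F : ℕ → ℝ → ℝ := fun k t =>
    (Real.Gamma a)⁻¹ * (w ^ k / (k.factorial : ℝ)) * (Real.exp (-t) * t ^ (a + k - 1)) with hF
  have hInt : ∀ k : ℕ, Integrable (F k) (volume.restrict (Set.Ioi 0)) := by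
    intro k
    have h := Real.GammaIntegral_convergent (s := a + k) (by positivity)
    have h2 : IntegrableOn (fun t : ℝ => Real.exp (-t) * t ^ (a + (k:ℝ) - 1)) (Set.Ioi 0) := by
      simpa [add_sub_assoc] using h
    exact h2.const_mul _
  have hval : ∀ k : ℕ, ∫ t in Set.Ioi (0:ℝ), F k t
      = poch a k * w ^ k / (k.factorial : ℝ) := by
    intro k
    rw [hF]
    simp only
    rw [integral_const_mul]
    have : ∫ t in Set.Ioi (0:ℝ), Real.exp (-t) * t ^ (a + k - 1)
        = Real.Gamma (a + k) := by
      rw [Real.Gamma_eq_integral (by positivity)]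
    rw [this, Gamma_poch ha]
    field_simp
  have hnorm : ∀ k : ℕ, (∫ t in Set.Ioi (0:ℝ), ‖F k t‖)
      = poch a k * w ^ k / (k.factorial : ℝ) := by
    intro k
    rw [← hval k]
    apply setIntegral_congr_fun measurableSet_Ioi
    intro t ht
    show ‖F k t‖ = F k t
    rw [Real.norm_of_nonneg]
    have : (0:ℝ) < t := ht
    positivity
  have hsum : Summable fun k : ℕ => ∫ t in Set.Ioi (0:ℝ), ‖F k t‖ := by
    simp_rw [hnorm]; exact summable_poch ha hw0 hw1
  have hswap := MeasureTheory.integral_tsum_of_summable_integral_norm hInt hsum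
  simp_rw [hval] at hswap
  -- compute the RHS
  have hpt : ∀ t ∈ Set.Ioi (0:ℝ), (∑' k : ℕ, F k t)
      = (Real.Gamma a)⁻¹ * (t ^ (a - 1) * Real.exp (-((1-w) * t))) := by
    intro t ht
    have ht0 : (0:ℝ) < t := ht
    have h1 : ∀ k : ℕ, F k t
        = ((Real.Gamma a)⁻¹ * (Real.exp (-t) * t ^ (a-1))) * ((w*t) ^ k / (k.factorial : ℝ)) := by
      intro k
      rw [hF]
      simp only
      rw [show a + k - 1 = (a - 1) + (k:ℝ) by ring, Real.rpow_add ht0,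
        Real.rpow_natCast, mul_pow]
      ring
    simp_rw [h1]
    rw [tsum_mul_left, ← real_exp_tsum,
      show (-((1-w)*t)) = -t + w*t by ring, Real.exp_add]
    ring
  rw [setIntegral_congr_fun measurableSet_Ioi hpt, integral_const_mul,
    Real.integral_rpow_mul_exp_neg_mul_Ioi ha (by linarith : (0:ℝ) < 1 - w)] at hswap
  have hfin : (Real.Gamma a)⁻¹ * ((1 / (1-w)) ^ a * Real.Gamma a) = (1-w) ^ (-a) := by
    rw [one_div, Real.inv_rpow (by linarith), ← Real.rpow_neg (by linarith)]
    field_simp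
  rw [hfin] at hswap
  exact (summable_poch ha hw0 hw1).hasSum_iff.mpr hswap

lemma betaReal_le {a b : ℝ} (ha : 0 < a) (hb : 0 < b) (k : ℕ) :
    Real.Gamma (a+k) * Real.Gamma b / Real.Gamma ((a+k)+b)
      ≤ Real.Gamma a * Real.Gamma b / Real.Gamma (a+b) := by
  rw [← betaReal ha hb, ← betaReal (by positivity : (0:ℝ) < a + k) hb]
  apply setIntegral_mono_on (betaIntegrable (by positivity) hb) (betaIntegrable ha hb)
    measurableSet_Ioo
  intro x hx
  have h1 : x ^ (a + k - 1) ≤ x ^ (a - 1) :=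
    Real.rpow_le_rpow_of_exponent_ge hx.1 hx.2.le (by
      have : (0:ℝ) ≤ k := Nat.cast_nonneg k
      linarith)
  have h2 : (0:ℝ) ≤ (1-x) ^ (b-1) := Real.rpow_nonneg (by linarith [hx.2]) _
  exact mul_le_mul_of_nonneg_right h1 h2

lemma inner_int (n : ℕ) {a w : ℝ} (ha : 0 < a) (hw0 : 0 < w) (hw1 : w < 1) :
    ∫ y in Set.Ioo (0:ℝ) 1, y ^ (a-1) * (1-y) ^ n / (1 - w * y) ^ a
      = ∑' k : ℕ, poch a k * w ^ k / (k.factorial:ℝ) *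
          (Real.Gamma (a+k) * Real.Gamma ((n:ℝ)+1) / Real.Gamma ((a+k) + ((n:ℝ)+1))) := by
  set G : ℕ → ℝ → ℝ := fun k y =>
    (poch a k * w ^ k / (k.factorial:ℝ)) * (y ^ (a + k - 1) * (1-y) ^ n) with hG
  have hbeta : ∀ k : ℕ, Set.EqOn (fun y : ℝ => y ^ ((a+k)-1) * (1-y) ^ (((n:ℝ)+1)-1))
      (fun y : ℝ => y ^ (a + (k:ℝ) - 1) * (1-y) ^ n) (Set.Ioo 0 1) := by
    intro k y hy
    simp only
    rw [show ((n:ℝ)+1)-1 = (n:ℝ) by ring, Real.rpow_natCast, add_sub_assoc]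
  have hInt : ∀ k : ℕ, Integrable (G k) (volume.restrict (Set.Ioo 0 1)) := by
    intro k
    exact (((betaIntegrable (by positivity : (0:ℝ) < a + k)
      (by positivity : (0:ℝ) < (n:ℝ)+1)).congr_fun (hbeta k) measurableSet_Ioo).const_mul _)
  have hval : ∀ k : ℕ, ∫ y in Set.Ioo (0:ℝ) 1, G k y
      = poch a k * w ^ k / (k.factorial:ℝ) *
          (Real.Gamma (a+k) * Real.Gamma ((n:ℝ)+1) / Real.Gamma ((a+k) + ((n:ℝ)+1))) := by
    intro k
    rw [hG]
    simp only
    rw [integral_const_mul, ← setIntegral_congr_fun measurableSet_Ioo (hbeta k),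
      betaReal (by positivity) (by positivity)]
  have hnorm : ∀ k : ℕ, (∫ y in Set.Ioo (0:ℝ) 1, ‖G k y‖) = ∫ y in Set.Ioo (0:ℝ) 1, G k y := by
    intro k
    apply setIntegral_congr_fun measurableSet_Ioo
    intro y hy
    show ‖G k y‖ = G k y
    rw [Real.norm_of_nonneg]
    have h1 := hy.1; have h2 := hy.2
    have hp := poch_pos ha k
    have : (0:ℝ) ≤ 1 - y := by linarith
    positivity
  have hsum : Summable fun k : ℕ => ∫ y in Set.Ioo (0:ℝ) 1, ‖G k y‖ := by
    simp_rw [hnorm]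
    simp_rw [hval]
    refine Summable.of_nonneg_of_le (fun k => ?_) (fun k => ?_)
      ((summable_poch ha hw0 hw1).mul_right
        (Real.Gamma a * Real.Gamma ((n:ℝ)+1) / Real.Gamma (a + ((n:ℝ)+1))))
    · have hp := poch_pos ha k
      have g1 := Real.Gamma_pos_of_pos (by positivity : (0:ℝ) < a + k)
      have g2 := Real.Gamma_pos_of_pos (by positivity : (0:ℝ) < (n:ℝ)+1)
      have g3 := Real.Gamma_pos_of_pos (by positivity : (0:ℝ) < (a+k) + ((n:ℝ)+1))
      positivity
    · have hp := poch_pos ha k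
      have hc : (0:ℝ) ≤ poch a k * w ^ k / (k.factorial:ℝ) := by positivity
      exact mul_le_mul_of_nonneg_left (betaReal_le ha (by positivity) k) hc
  have hswap := MeasureTheory.integral_tsum_of_summable_integral_norm hInt hsum
  simp_rw [hval] at hswap
  rw [hswap]
  apply setIntegral_congr_fun measurableSet_Ioo
  intro y hy
  have hy1 := hy.1; have hy2 := hy.2
  have hwy0 : 0 < w * y := by positivity
  have hwy1 : w * y < 1 := by nlinarith
  have hbin := (binom_hasSum ha hwy0 hwy1).mul_left (y ^ (a-1) * (1-y) ^ n)
  have heq : ∀ k : ℕ, y ^ (a-1) * (1-y) ^ n * (poch a k * (w*y) ^ k / (k.factorial:ℝ))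
      = G k y := by
    intro k
    rw [hG]
    simp only
    rw [show a + (k:ℝ) - 1 = (a - 1) + (k:ℝ) by ring, Real.rpow_add hy1,
      Real.rpow_natCast, mul_pow]
    ring
  simp only
  rw [div_eq_mul_inv, ← Real.rpow_neg (by linarith : (0:ℝ) ≤ 1 - w*y), ← hbin.tsum_eq]
  exact tsum_congr heq

set_option maxHeartbeats 2000000 in
/-- hypergeometric evaluation of `J_n(z)`. -/
theorem Jint_eq_hypergeometric (z : ℝ) (hz : z ∈ Set.Ioo (0:ℝ) 1) (n : ℕ) :
    Jint n z
      = Real.Gamma ((n : ℝ) + 1/2) ^ 3 * Real.Gamma ((n : ℝ) + 1)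
          / (Real.Gamma (2 * (n : ℝ) + 1) * Real.Gamma (2 * (n : ℝ) + 3/2))
        * F32 ((n : ℝ) + 1/2) ((n : ℝ) + 1/2) ((n : ℝ) + 1/2)
            (2 * (n : ℝ) + 1) (2 * (n : ℝ) + 3/2) z := by
  obtain ⟨hz0, hz1⟩ := hz
  set a : ℝ := (n:ℝ) + 1/2 with ha_def
  have ha : 0 < a := by positivity
  have e1 : (n:ℝ) - 1/2 = a - 1 := by rw [ha_def]; ring
  have hg1 : (0:ℝ) < (n:ℝ) + 1 := by positivity
  set H : ℕ → ℝ → ℝ := fun k x =>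
    (poch a k * z ^ k / (k.factorial:ℝ) *
      (Real.Gamma (a+k) * Real.Gamma ((n:ℝ)+1) / Real.Gamma ((a+k) + ((n:ℝ)+1)))) *
      (x ^ (a + k - 1) * (1-x) ^ (a-1)) with hH
  have hstep1 : ∀ x ∈ Set.Ioo (0:ℝ) 1,
      (∫ y in Set.Ioo (0:ℝ) 1,
        x ^ ((n : ℝ) - 1/2) * (1 - x) ^ ((n : ℝ) - 1/2) * y ^ ((n : ℝ) - 1/2) * (1 - y) ^ (n : ℕ)
          / (1 - z * x * y) ^ ((n : ℝ) + 1/2))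
        = ∑' k : ℕ, H k x := by
    intro x hx
    have hx1 := hx.1
    have hx2 := hx.2
    have hzx0 : 0 < z * x := by positivity
    have hzx1 : z * x < 1 := by nlinarith
    simp only [e1, ← ha_def]
    have hre : ∀ y : ℝ, x ^ (a-1) * (1-x) ^ (a-1) * y ^ (a-1) * (1-y) ^ (n:ℕ)
          / (1 - z * x * y) ^ a
        = (x ^ (a-1) * (1-x) ^ (a-1)) * (y ^ (a-1) * (1-y) ^ (n:ℕ) / (1 - (z*x) * y) ^ a) := by
      intro y
      rw [mul_assoc z x y]
      ring
    simp only [hre]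
    rw [integral_const_mul, inner_int n ha hzx0 hzx1, ← tsum_mul_left]
    apply tsum_congr
    intro k
    rw [hH]
    simp only
    rw [show a + (k:ℝ) - 1 = (a - 1) + (k:ℝ) by ring, Real.rpow_add hx1,
      Real.rpow_natCast, mul_pow]
    ring
  rw [Jint, setIntegral_congr_fun measurableSet_Ioo hstep1]
  -- swap sum and integral
  have hInt : ∀ k : ℕ, Integrable (H k) (volume.restrict (Set.Ioo 0 1)) := by
    intro k
    exact (betaIntegrable (by positivity : (0:ℝ) < a + k) ha).const_mul _
  have hval : ∀ k : ℕ, ∫ x in Set.Ioo (0:ℝ) 1, H k x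
      = poch a k * z ^ k / (k.factorial:ℝ) *
          (Real.Gamma (a+k) * Real.Gamma ((n:ℝ)+1) / Real.Gamma ((a+k) + ((n:ℝ)+1))) *
          (Real.Gamma (a+k) * Real.Gamma a / Real.Gamma ((a+k) + a)) := by
    intro k
    rw [hH]
    simp only
    rw [integral_const_mul, betaReal (by positivity : (0:ℝ) < a + k) ha]
  have hterm_pos : ∀ k : ℕ, 0 ≤ poch a k * z ^ k / (k.factorial:ℝ) *
          (Real.Gamma (a+k) * Real.Gamma ((n:ℝ)+1) / Real.Gamma ((a+k) + ((n:ℝ)+1))) := by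
    intro k
    have hp := poch_pos ha k
    have g1 := Real.Gamma_pos_of_pos (by positivity : (0:ℝ) < a + k)
    have g2 := Real.Gamma_pos_of_pos hg1
    have g3 := Real.Gamma_pos_of_pos (by positivity : (0:ℝ) < (a+k) + ((n:ℝ)+1))
    positivity
  have hnorm : ∀ k : ℕ, (∫ x in Set.Ioo (0:ℝ) 1, ‖H k x‖) = ∫ x in Set.Ioo (0:ℝ) 1, H k x := by
    intro k
    apply setIntegral_congr_fun measurableSet_Ioo
    intro x hx
    show ‖H k x‖ = H k x
    rw [Real.norm_of_nonneg]
    rw [hH]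
    simp only
    have h1 := hx.1
    have h2 : (0:ℝ) ≤ 1 - x := by linarith [hx.2]
    have hc := hterm_pos k
    positivity
  have hsum : Summable fun k : ℕ => ∫ x in Set.Ioo (0:ℝ) 1, ‖H k x‖ := by
    simp_rw [hnorm, hval]
    refine Summable.of_nonneg_of_le (fun k => ?_) (fun k => ?_)
      ((summable_poch ha hz0 hz1).mul_right
        ((Real.Gamma a * Real.Gamma ((n:ℝ)+1) / Real.Gamma (a + ((n:ℝ)+1))) *
         (Real.Gamma a * Real.Gamma a / Real.Gamma (a + a))))
    · have hc := hterm_pos k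
      have g1 := Real.Gamma_pos_of_pos (by positivity : (0:ℝ) < a + k)
      have g3 := Real.Gamma_pos_of_pos (by positivity : (0:ℝ) < (a+k) + a)
      have hGa := Real.Gamma_pos_of_pos ha
      positivity
    · have hp := poch_pos ha k
      have hc0 : (0:ℝ) ≤ poch a k * z ^ k / (k.factorial:ℝ) := by positivity
      have b1 := betaReal_le ha hg1 k
      have b2 := betaReal_le ha ha k
      have g1 := Real.Gamma_pos_of_pos (by positivity : (0:ℝ) < a + k)
      have g2 := Real.Gamma_pos_of_pos hg1
      have g3 := Real.Gamma_pos_of_pos (by positivity : (0:ℝ) < (a+k) + ((n:ℝ)+1))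
      have g4 := Real.Gamma_pos_of_pos (by positivity : (0:ℝ) < (a+k) + a)
      have hGa := Real.Gamma_pos_of_pos ha
      calc poch a k * z ^ k / (k.factorial:ℝ) *
          (Real.Gamma (a+k) * Real.Gamma ((n:ℝ)+1) / Real.Gamma ((a+k) + ((n:ℝ)+1))) *
          (Real.Gamma (a+k) * Real.Gamma a / Real.Gamma ((a+k) + a))
          ≤ poch a k * z ^ k / (k.factorial:ℝ) *
            (Real.Gamma a * Real.Gamma ((n:ℝ)+1) / Real.Gamma (a + ((n:ℝ)+1))) *
            (Real.Gamma a * Real.Gamma a / Real.Gamma (a + a)) := by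
            apply mul_le_mul (mul_le_mul_of_nonneg_left b1 hc0) b2 (by positivity)
            positivity
        _ = poch a k * z ^ k / (k.factorial:ℝ) *
            ((Real.Gamma a * Real.Gamma ((n:ℝ)+1) / Real.Gamma (a + ((n:ℝ)+1))) *
             (Real.Gamma a * Real.Gamma a / Real.Gamma (a + a))) := by ring
  have hswap := MeasureTheory.integral_tsum_of_summable_integral_norm hInt hsum
  simp_rw [hval] at hswap
  rw [← hswap]
  -- final algebra
  rw [F32, ← tsum_mul_left]
  apply tsum_congr
  intro k
  have hp := poch_pos ha k
  have hd := poch_pos (by positivity : (0:ℝ) < 2*(n:ℝ)+1) k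
  have he := poch_pos (by positivity : (0:ℝ) < 2*(n:ℝ)+3/2) k
  have hf : (0:ℝ) < (k.factorial:ℝ) := Nat.cast_pos.mpr k.factorial_pos
  have hGa := Real.Gamma_pos_of_pos ha
  have hG2 := Real.Gamma_pos_of_pos hg1
  have hGd := Real.Gamma_pos_of_pos (by positivity : (0:ℝ) < 2*(n:ℝ)+1)
  have hGe := Real.Gamma_pos_of_pos (by positivity : (0:ℝ) < 2*(n:ℝ)+3/2)
  have r1 : Real.Gamma (a + k) = Real.Gamma a * poch a k := Gamma_poch ha k
  have r2 : Real.Gamma ((a+k) + ((n:ℝ)+1))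
      = Real.Gamma (2*(n:ℝ)+3/2) * poch (2*(n:ℝ)+3/2) k := by
    rw [show (a+(k:ℝ)) + ((n:ℝ)+1) = (2*(n:ℝ)+3/2) + (k:ℝ) by rw [ha_def]; ring]
    exact Gamma_poch (by positivity) k
  have r3 : Real.Gamma ((a+k) + a) = Real.Gamma (2*(n:ℝ)+1) * poch (2*(n:ℝ)+1) k := by
    rw [show (a+(k:ℝ)) + a = (2*(n:ℝ)+1) + (k:ℝ) by rw [ha_def]; ring]
    exact Gamma_poch (by positivity) k
  rw [r1, r2, r3]
  field_simp
end

section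
/- For fixed z with 0 < z < 1, the double integrals J_n(z) = ∫_0^1∫_0^1 x^{n-1/2}(1-x)^{n-1/2} y^{n-1/2}(1-y)^n / (1-zxy)^{n+1/2} dx dy satisfy 0 < J_n(z) and J_n(z) → 0 as n → ∞. -/
open MeasureTheory Filter
open Real

noncomputable def gfun (z : ℝ) (n : ℕ) (x y : ℝ) : ℝ :=
  x ^ ((n : ℝ) - 1/2) * (1 - x) ^ ((n : ℝ) - 1/2) * y ^ ((n : ℝ) - 1/2) * (1 - y) ^ (n : ℕ)
      / (1 - z * x * y) ^ ((n : ℝ) + 1/2)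

lemma gfun_decomp (z : ℝ) (n : ℕ) (x y : ℝ) (hx0 : 0 < x) (hx1 : x < 1)
    (hy0 : 0 < y) (hD : 0 < 1 - z * x * y) :
    gfun z n x y = (x * (1-x) * (y * (1-y)) / (1 - z*x*y))^n *
      (x ^ (-(1/2):ℝ) * (1-x) ^ (-(1/2):ℝ) * y ^ (-(1/2):ℝ) * (1 - z*x*y) ^ (-(1/2):ℝ)) := by
  have e : ∀ t : ℝ, 0 < t → t ^ ((n:ℝ) - 1/2) = t ^ n * t ^ (-(1/2):ℝ) := by
    intro t ht
    rw [show ((n:ℝ) - 1/2) = (n:ℝ) + (-(1/2)) by ring, rpow_add ht, rpow_natCast]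
  have ed : (1 - z*x*y) ^ ((n:ℝ) + 1/2) = (1 - z*x*y) ^ n * (1 - z*x*y) ^ ((1/2):ℝ) := by
    rw [rpow_add hD, rpow_natCast]
  have eneg : (1 - z*x*y) ^ (-(1/2):ℝ) = ((1 - z*x*y) ^ ((1/2):ℝ))⁻¹ := by
    rw [← rpow_neg hD.le]
  have hDn : (1 - z*x*y : ℝ) ^ n ≠ 0 := pow_ne_zero _ hD.ne'
  have hDh : (1 - z*x*y : ℝ) ^ ((1/2):ℝ) ≠ 0 := (rpow_pos_of_pos hD _).ne'
  rw [gfun, e x hx0, e _ (by linarith : (0:ℝ) < 1 - x), e y hy0, ed, eneg, div_pow,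
    mul_pow, mul_pow, mul_pow]
  field_simp

lemma aux_ineq (x y : ℝ) (hx0 : 0 < x) (hx1 : x < 1) (hy0 : 0 < y) (hy1 : y < 1) :
    x * (1-x) * (y * (1-y)) ≤ 4/27 * (1 - x*y) := by
  have h1 : x^2*(1-x) ≤ 4/27 := by nlinarith [sq_nonneg (3*x-2), sq_nonneg x]
  have h2 : y^2*(1-y) ≤ 4/27 := by nlinarith [sq_nonneg (3*y-2), sq_nonneg y]
  have h3 : (1-x)*(1-y) ≤ (1 - x*y)^2 := by
    nlinarith [sq_nonneg (x-y), sq_nonneg (x*y-1), mul_pos hx0 hy0]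
  have ha : (0:ℝ) ≤ x * (1-x) * (y * (1-y)) :=
    mul_nonneg (mul_nonneg hx0.le (by linarith)) (mul_nonneg hy0.le (by linarith))
  have hb : (0:ℝ) ≤ 4/27 * (1 - x*y) := by nlinarith [mul_pos hx0 hy0]
  have key : (x * (1-x) * (y * (1-y)))^2 ≤ (4/27 * (1 - x*y))^2 := by
    have e1 : (x * (1-x) * (y * (1-y)))^2 = (x^2*(1-x)) * (y^2*(1-y)) * ((1-x)*(1-y)) := by ring
    have e2 : (4/27 * (1 - x*y))^2 = (4/27) * (4/27) * (1-x*y)^2 := by ring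
    rw [e1, e2]
    have hyn : (0:ℝ) ≤ y^2*(1-y) := mul_nonneg (sq_nonneg y) (by linarith)
    have hcn : (0:ℝ) ≤ (1-x)*(1-y) := mul_nonneg (by linarith) (by linarith)
    exact mul_le_mul (mul_le_mul h1 h2 hyn (by norm_num)) h3 hcn (by positivity)
  nlinarith [key, ha, hb]

section main
variable {z : ℝ}

lemma Dpos (hz0 : 0 < z) (hz1 : z < 1) {x y : ℝ} (hx : x ∈ Set.Ioo (0:ℝ) 1)
    (hy : y ∈ Set.Ioo (0:ℝ) 1) :
    0 < 1 - z * x * y ∧ 1 - z ≤ 1 - z * x * y ∧ 1 - x * y ≤ 1 - z * x * y := by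
  obtain ⟨hx0, hx1⟩ := hx; obtain ⟨hy0, hy1⟩ := hy
  have hxy1 : x * y < 1 := by nlinarith
  have hxy0 : 0 < x * y := mul_pos hx0 hy0
  have h1 : z * (x * y) < z := by nlinarith
  refine ⟨by nlinarith, by nlinarith, by nlinarith⟩

lemma gfun_pos (hz0 : 0 < z) (hz1 : z < 1) (n : ℕ) {x y : ℝ} (hx : x ∈ Set.Ioo (0:ℝ) 1)
    (hy : y ∈ Set.Ioo (0:ℝ) 1) : 0 < gfun z n x y := by
  obtain ⟨hD, -, -⟩ := Dpos hz0 hz1 hx hy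
  obtain ⟨hx0, hx1⟩ := hx; obtain ⟨hy0, hy1⟩ := hy
  apply div_pos
  · apply mul_pos
    apply mul_pos
    apply mul_pos
    · exact rpow_pos_of_pos hx0 _
    · exact rpow_pos_of_pos (by linarith) _
    · exact rpow_pos_of_pos hy0 _
    · exact pow_pos (by linarith) _
  · exact rpow_pos_of_pos hD _

lemma gfun_le (hz0 : 0 < z) (hz1 : z < 1) (n : ℕ) {x y : ℝ} (hx : x ∈ Set.Ioo (0:ℝ) 1)
    (hy : y ∈ Set.Ioo (0:ℝ) 1) :
    gfun z n x y ≤ ((4/27)^n * (x ^ (-(1/2):ℝ) * (1-x) ^ (-(1/2):ℝ) * (1-z) ^ (-(1/2):ℝ)))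
      * y ^ (-(1/2):ℝ) := by
  obtain ⟨hD, hDz, hDxy⟩ := Dpos hz0 hz1 hx hy
  obtain ⟨hx0, hx1⟩ := hx; obtain ⟨hy0, hy1⟩ := hy
  rw [gfun_decomp z n x y hx0 hx1 hy0 hD]
  have hA0 : (0:ℝ) ≤ x * (1-x) * (y * (1-y)) / (1 - z*x*y) := by
    apply div_nonneg _ hD.le
    exact mul_nonneg (mul_nonneg hx0.le (by linarith)) (mul_nonneg hy0.le (by linarith))
  have hA : x * (1-x) * (y * (1-y)) / (1 - z*x*y) ≤ 4/27 := by
    rw [div_le_iff₀ hD]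
    calc x * (1-x) * (y * (1-y)) ≤ 4/27 * (1 - x*y) := aux_ineq x y hx0 hx1 hy0 hy1
      _ ≤ 4/27 * (1 - z*x*y) := by linarith
  have hd : (1 - z*x*y) ^ (-(1/2):ℝ) ≤ (1-z) ^ (-(1/2):ℝ) :=
    rpow_le_rpow_of_nonpos (by linarith) hDz (by norm_num)
  have habc : (0:ℝ) ≤ x ^ (-(1/2):ℝ) * (1-x) ^ (-(1/2):ℝ) * y ^ (-(1/2):ℝ) := by
    have := rpow_pos_of_pos hx0 (-(1/2):ℝ)
    have := rpow_pos_of_pos (show (0:ℝ) < 1-x by linarith) (-(1/2):ℝ)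
    have := rpow_pos_of_pos hy0 (-(1/2):ℝ)
    positivity
  have hG : x ^ (-(1/2):ℝ) * (1-x) ^ (-(1/2):ℝ) * y ^ (-(1/2):ℝ) * (1 - z*x*y) ^ (-(1/2):ℝ)
      ≤ x ^ (-(1/2):ℝ) * (1-x) ^ (-(1/2):ℝ) * y ^ (-(1/2):ℝ) * (1-z) ^ (-(1/2):ℝ) :=
    mul_le_mul_of_nonneg_left hd habc
  have hG0 : (0:ℝ) ≤ x ^ (-(1/2):ℝ) * (1-x) ^ (-(1/2):ℝ) * y ^ (-(1/2):ℝ)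
      * (1 - z*x*y) ^ (-(1/2):ℝ) := mul_nonneg habc (rpow_pos_of_pos hD _).le
  calc (x * (1-x) * (y * (1-y)) / (1 - z*x*y))^n *
        (x ^ (-(1/2):ℝ) * (1-x) ^ (-(1/2):ℝ) * y ^ (-(1/2):ℝ) * (1 - z*x*y) ^ (-(1/2):ℝ))
      ≤ (4/27)^n * (x ^ (-(1/2):ℝ) * (1-x) ^ (-(1/2):ℝ) * y ^ (-(1/2):ℝ) * (1-z) ^ (-(1/2):ℝ)) :=
        mul_le_mul (pow_le_pow_left₀ hA0 hA n) hG hG0 (by positivity)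
    _ = ((4/27)^n * (x ^ (-(1/2):ℝ) * (1-x) ^ (-(1/2):ℝ) * (1-z) ^ (-(1/2):ℝ)))
        * y ^ (-(1/2):ℝ) := by ring


lemma gfun_measurable (z : ℝ) (n : ℕ) : Measurable (fun p : ℝ × ℝ => gfun z n p.1 p.2) := by
  unfold gfun; fun_prop

lemma int_i1 : IntegrableOn (fun y : ℝ => y ^ (-(1/2):ℝ)) (Set.Ioo 0 1) volume :=
  ((intervalIntegral.intervalIntegrable_rpow' (by norm_num)).1).mono_set Set.Ioo_subset_Ioc_self

lemma int_i2 : IntegrableOn (fun x : ℝ => (1-x) ^ (-(1/2):ℝ)) (Set.Ioo 0 1) volume := by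
  have h : IntervalIntegrable (fun x : ℝ => (1-x) ^ (-(1/2):ℝ)) volume 0 1 := by
    simpa using ((intervalIntegral.intervalIntegrable_rpow' (a:=0) (b:=1)
      (by norm_num : (-1:ℝ) < -(1/2))).comp_sub_left 1).symm
  exact h.1.mono_set Set.Ioo_subset_Ioc_self

lemma int_psi : IntegrableOn (fun x : ℝ => x ^ (-(1/2):ℝ) * (1-x) ^ (-(1/2):ℝ))
    (Set.Ioo 0 1) volume := by
  have hC0 : (0:ℝ) < ((1/2:ℝ)) ^ (-(1/2):ℝ) := rpow_pos_of_pos (by norm_num) _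
  apply Integrable.mono' ((int_i1.add int_i2).const_mul (((1/2:ℝ)) ^ (-(1/2):ℝ)))
  · have : Measurable fun x : ℝ => x ^ (-(1/2):ℝ) * (1-x) ^ (-(1/2):ℝ) := by fun_prop
    exact this.aestronglyMeasurable
  · rw [ae_restrict_iff' measurableSet_Ioo]
    filter_upwards with x hx
    obtain ⟨hx0, hx1⟩ := hx
    have ha := rpow_pos_of_pos hx0 (-(1/2):ℝ)
    have hb := rpow_pos_of_pos (show (0:ℝ) < 1 - x by linarith) (-(1/2):ℝ)
    rw [Real.norm_eq_abs, abs_of_nonneg (by positivity)]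
    simp only [Pi.add_apply]
    rcases le_total x (1/2) with h | h
    · have hle : (1-x) ^ (-(1/2):ℝ) ≤ ((1/2:ℝ)) ^ (-(1/2):ℝ) :=
        rpow_le_rpow_of_nonpos (by norm_num) (by linarith) (by norm_num)
      nlinarith [mul_pos hC0 hb, mul_le_mul_of_nonneg_left hle ha.le]
    · have hle : x ^ (-(1/2):ℝ) ≤ ((1/2:ℝ)) ^ (-(1/2):ℝ) :=
        rpow_le_rpow_of_nonpos (by norm_num) (by linarith) (by norm_num)
      nlinarith [mul_pos hC0 ha, mul_le_mul_of_nonneg_right hle hb.le]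

end main


/-- for fixed `0 < z < 1`, the integrals `J_n(z)` are positive and
tend to `0` as `n → ∞`. -/
theorem Jint_pos_tendsto_zero (z : ℝ) (hz : z ∈ Set.Ioo (0:ℝ) 1) :
    (∀ n : ℕ, 0 < Jint n z) ∧
    Tendsto (fun n : ℕ => Jint n z) atTop (nhds 0) := by
  obtain ⟨hz0, hz1⟩ := hz
  have hinner : ∀ (n : ℕ), ∀ x ∈ Set.Ioo (0:ℝ) 1,
      IntegrableOn (fun y => gfun z n x y) (Set.Ioo 0 1) volume := by
    intro n x hx
    apply Integrable.mono' (int_i1.const_mul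
      ((4/27)^n * (x ^ (-(1/2):ℝ) * (1-x) ^ (-(1/2):ℝ) * (1-z) ^ (-(1/2):ℝ))))
    · exact ((gfun_measurable z n).comp (measurable_const.prodMk measurable_id)).aestronglyMeasurable
    · rw [ae_restrict_iff' measurableSet_Ioo]
      filter_upwards with y hy
      rw [Real.norm_eq_abs, abs_of_nonneg (gfun_pos hz0 hz1 n hx hy).le]
      exact gfun_le hz0 hz1 n hx hy
  have hJ : ∀ n, Jint n z
      = ∫ x in Set.Ioo (0:ℝ) 1, ∫ y in Set.Ioo (0:ℝ) 1, gfun z n x y := fun n => rfl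
  have hIpos : ∀ (n : ℕ), ∀ x ∈ Set.Ioo (0:ℝ) 1,
      0 < ∫ y in Set.Ioo (0:ℝ) 1, gfun z n x y := by
    intro n x hx
    rw [setIntegral_pos_iff_support_of_nonneg_ae _ (hinner n x hx)]
    · refine lt_of_lt_of_le ?_
        (measure_mono (fun y hy => ⟨(gfun_pos hz0 hz1 n hx hy).ne', hy⟩))
      rw [Real.volume_Ioo]; norm_num
    · filter_upwards [ae_restrict_mem measurableSet_Ioo] with y hy
        using (gfun_pos hz0 hz1 n hx hy).le
  have hIle : ∀ (n : ℕ), ∀ x ∈ Set.Ioo (0:ℝ) 1,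
      (∫ y in Set.Ioo (0:ℝ) 1, gfun z n x y)
        ≤ ((4/27)^n * ((1-z) ^ (-(1/2):ℝ) * (∫ y in Set.Ioo (0:ℝ) 1, y ^ (-(1/2):ℝ))))
          * (x ^ (-(1/2):ℝ) * (1-x) ^ (-(1/2):ℝ)) := by
    intro n x hx
    calc (∫ y in Set.Ioo (0:ℝ) 1, gfun z n x y)
        ≤ ∫ y in Set.Ioo (0:ℝ) 1,
            ((4/27)^n * (x ^ (-(1/2):ℝ) * (1-x) ^ (-(1/2):ℝ) * (1-z) ^ (-(1/2):ℝ)))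
              * y ^ (-(1/2):ℝ) :=
          setIntegral_mono_on (hinner n x hx) (int_i1.const_mul _) measurableSet_Ioo
            (fun y hy => gfun_le hz0 hz1 n hx hy)
      _ = ((4/27)^n * (x ^ (-(1/2):ℝ) * (1-x) ^ (-(1/2):ℝ) * (1-z) ^ (-(1/2):ℝ)))
            * (∫ y in Set.Ioo (0:ℝ) 1, y ^ (-(1/2):ℝ)) := MeasureTheory.integral_const_mul _ _
      _ = ((4/27)^n * ((1-z) ^ (-(1/2):ℝ) * (∫ y in Set.Ioo (0:ℝ) 1, y ^ (-(1/2):ℝ))))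
            * (x ^ (-(1/2):ℝ) * (1-x) ^ (-(1/2):ℝ)) := by ring
  have hImeas : ∀ (n : ℕ), AEStronglyMeasurable
      (fun x => ∫ y in Set.Ioo (0:ℝ) 1, gfun z n x y)
      (volume.restrict (Set.Ioo (0:ℝ) 1)) := fun n =>
    ((gfun_measurable z n).stronglyMeasurable.integral_prod_right').aestronglyMeasurable
  have hIint : ∀ (n : ℕ), IntegrableOn
      (fun x => ∫ y in Set.Ioo (0:ℝ) 1, gfun z n x y) (Set.Ioo (0:ℝ) 1) volume := by
    intro n
    apply Integrable.mono' (int_psi.const_mul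
      ((4/27)^n * ((1-z) ^ (-(1/2):ℝ) * (∫ y in Set.Ioo (0:ℝ) 1, y ^ (-(1/2):ℝ)))))
      (hImeas n)
    rw [ae_restrict_iff' measurableSet_Ioo]
    filter_upwards with x hx
    rw [Real.norm_eq_abs, abs_of_nonneg (hIpos n x hx).le]
    exact hIle n x hx
  have hJpos : ∀ n : ℕ, 0 < Jint n z := by
    intro n
    rw [hJ]
    rw [setIntegral_pos_iff_support_of_nonneg_ae _ (hIint n)]
    · refine lt_of_lt_of_le ?_ (measure_mono (fun x hx => ⟨(hIpos n x hx).ne', hx⟩))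
      rw [Real.volume_Ioo]; norm_num
    · filter_upwards [ae_restrict_mem measurableSet_Ioo] with x hx
        using (hIpos n x hx).le
  refine ⟨hJpos, ?_⟩
  have hJle : ∀ n : ℕ, Jint n z
      ≤ ((1-z) ^ (-(1/2):ℝ) * (∫ y in Set.Ioo (0:ℝ) 1, y ^ (-(1/2):ℝ))
          * (∫ x in Set.Ioo (0:ℝ) 1, x ^ (-(1/2):ℝ) * (1-x) ^ (-(1/2):ℝ))) * (4/27)^n := by
    intro n
    rw [hJ]
    calc (∫ x in Set.Ioo (0:ℝ) 1, ∫ y in Set.Ioo (0:ℝ) 1, gfun z n x y)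
        ≤ ∫ x in Set.Ioo (0:ℝ) 1,
            ((4/27)^n * ((1-z) ^ (-(1/2):ℝ) * (∫ y in Set.Ioo (0:ℝ) 1, y ^ (-(1/2):ℝ))))
              * (x ^ (-(1/2):ℝ) * (1-x) ^ (-(1/2):ℝ)) :=
          setIntegral_mono_on (hIint n) (int_psi.const_mul _) measurableSet_Ioo (hIle n)
      _ = ((4/27)^n * ((1-z) ^ (-(1/2):ℝ) * (∫ y in Set.Ioo (0:ℝ) 1, y ^ (-(1/2):ℝ))))
            * (∫ x in Set.Ioo (0:ℝ) 1, x ^ (-(1/2):ℝ) * (1-x) ^ (-(1/2):ℝ)) :=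
          MeasureTheory.integral_const_mul _ _
      _ = ((1-z) ^ (-(1/2):ℝ) * (∫ y in Set.Ioo (0:ℝ) 1, y ^ (-(1/2):ℝ))
            * (∫ x in Set.Ioo (0:ℝ) 1, x ^ (-(1/2):ℝ) * (1-x) ^ (-(1/2):ℝ))) * (4/27)^n := by
          ring
  apply squeeze_zero (fun n => (hJpos n).le) hJle
  have h : Tendsto (fun n : ℕ => ((4:ℝ)/27)^n) atTop (nhds 0) :=
    tendsto_pow_atTop_nhds_zero_of_lt_one (by norm_num) (by norm_num)
  simpa using h.const_mul ((1-z) ^ (-(1/2):ℝ) * (∫ y in Set.Ioo (0:ℝ) 1, y ^ (-(1/2):ℝ))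
    * (∫ x in Set.Ioo (0:ℝ) 1, x ^ (-(1/2):ℝ) * (1-x) ^ (-(1/2):ℝ)))
end
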